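/- Let m = 1^{n_1}0^{z_1}1^{n_2}0^{z_2}⋯1^{n_ω}0^{z_ω} with n_1 < n_2 < ⋯ < n_ω and n_u < z_u for all 1 ≤ u ≤ ω. Set k = n_1 + z_1 + ⋯ + n_ω + z_ω, d_0 = 2^k - m - 1, and let D be the number with binary expansion 1^{n_1}0^{n_2}1^{z_2}⋯0^{n_ω}1^{z_ω}. Then D ≤ m - (2^{n_1} - 1)·d_0 < 2D; in particular ⌊(m - (2^{n_1} - 1)·d_0)/D⌋ = 1. -/

import Mathlib

set_option maxHeartbeats 1000000

open Finset

/-- `tailLen ω n z u = n_u + z_u + ⋯ + n_ω + z_ω`. -/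
def tailLen (ω : ℕ) (n z : ℕ → ℕ) (u : ℕ) : ℕ := ∑ v ∈ Finset.Icc u ω, (n v + z v)

/-- `cbeNum ω n z` is the natural number with binary expansion
`1^{n_1}0^{z_1}1^{n_2}0^{z_2}⋯1^{n_ω}0^{z_ω}`, i.e. the even `m` with
`cbe(m) = (n_1, z_1, …, n_ω, z_ω)`. -/
def cbeNum (ω : ℕ) (n z : ℕ → ℕ) : ℕ :=
  ∑ u ∈ Finset.Icc 1 ω, (2 ^ n u - 1) * 2 ^ (z u + tailLen ω n z (u + 1))

lemma icc_split (j ω : ℕ) (h : j ≤ ω) :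
    Finset.Icc j ω = insert j (Finset.Icc (j+1) ω) := by
  ext x; simp [Finset.mem_Icc]; omega

lemma tail_succ (ω : ℕ) (n z : ℕ → ℕ) (j : ℕ) (h : j ≤ ω) :
    tailLen ω n z j = n j + z j + tailLen ω n z (j+1) := by
  rw [tailLen, icc_split j ω h, Finset.sum_insert (by simp)]; rfl

lemma comp_sum (ω : ℕ) (n z : ℕ → ℕ) : ∀ d j, ω + 1 = j + d →
    (∑ v ∈ Finset.Icc j ω, ((2 ^ n v - 1) * 2 ^ (z v + tailLen ω n z (v+1)) +
      (2 ^ z v - 1) * 2 ^ (tailLen ω n z (v+1)))) + 1 = 2 ^ tailLen ω n z j := by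
  intro d
  induction d with
  | zero =>
    intro j hj
    have he : Finset.Icc j ω = ∅ := Finset.Icc_eq_empty (by omega)
    rw [tailLen, he]; simp
  | succ d ih =>
    intro j hj
    by_cases hle : j ≤ ω
    · rw [icc_split j ω hle, Finset.sum_insert (by simp), tail_succ ω n z j hle]
      have IH := ih (j+1) (by omega)
      set t := tailLen ω n z (j+1) with ht
      set S := ∑ v ∈ Finset.Icc (j+1) ω, ((2 ^ n v - 1) * 2 ^ (z v + tailLen ω n z (v+1)) +
        (2 ^ z v - 1) * 2 ^ (tailLen ω n z (v+1))) with hS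
      obtain ⟨a', ha⟩ : ∃ a', 2 ^ n j = a' + 1 :=
        ⟨2 ^ n j - 1, by have := Nat.one_le_two_pow (n := n j); omega⟩
      obtain ⟨b', hb⟩ : ∃ b', 2 ^ z j = b' + 1 :=
        ⟨2 ^ z j - 1, by have := Nat.one_le_two_pow (n := z j); omega⟩
      have e1 : 2 ^ (z j + t) = (b' + 1) * 2 ^ t := by rw [pow_add, hb]
      have e2 : 2 ^ (n j + z j + t) = (a' + 1) * ((b' + 1) * 2 ^ t) := by
        rw [pow_add, pow_add, ha, hb, mul_assoc]
      rw [e1, e2, ha, hb]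
      have hc : S + 1 = 2 ^ t := IH
      simp only [Nat.add_sub_cancel]
      nlinarith [hc]
    · have he : Finset.Icc j ω = ∅ := Finset.Icc_eq_empty (by omega)
      rw [tailLen, he]; simp

/-- With `m = 1^{n_1}0^{z_1}⋯1^{n_ω}0^{z_ω}`, `n_1 < ⋯ < n_ω`,
`n_u < z_u`, `k = n_1 + z_1 + ⋯ + n_ω + z_ω`, `d_0 = 2^k - m - 1`, and `D` the
number with binary expansion `1^{n_1}0^{n_2}1^{z_2}⋯0^{n_ω}1^{z_ω}`:
`D ≤ m - (2^{n_1} - 1)·d_0 < 2D`; in particular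
`⌊(m - (2^{n_1} - 1)·d_0)/D⌋ = 1`. -/
theorem sub_mul_d0_div_D (ω : ℕ) (hω : 1 ≤ ω) (n z : ℕ → ℕ)
    (hn : ∀ u ∈ Finset.Icc 1 ω, 1 ≤ n u) (hz : ∀ u ∈ Finset.Icc 1 ω, 1 ≤ z u)
    (hmono : ∀ u, 1 ≤ u → u < ω → n u < n (u + 1))
    (hspace : ∀ u ∈ Finset.Icc 1 ω, n u < z u)
    (m k d0 D : ℕ) (hm : m = cbeNum ω n z) (hk : k = tailLen ω n z 1)
    (hd0 : d0 = 2 ^ k - m - 1)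
    (hD : D = (2 ^ n 1 - 1) * 2 ^ tailLen ω n z 2 +
      ∑ v ∈ Finset.Icc 2 ω, (2 ^ z v - 1) * 2 ^ tailLen ω n z (v + 1)) :
    D ≤ m - (2 ^ n 1 - 1) * d0 ∧
    m - (2 ^ n 1 - 1) * d0 < 2 * D ∧
    (m - (2 ^ n 1 - 1) * d0) / D = 1 := by
  set M2 := ∑ v ∈ Finset.Icc 2 ω, (2 ^ n v - 1) * 2 ^ (z v + tailLen ω n z (v+1)) with hM2
  set Dd2 := ∑ v ∈ Finset.Icc 2 ω, (2 ^ z v - 1) * 2 ^ (tailLen ω n z (v+1)) with hDd2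
  set T := tailLen ω n z 2 with hT
  -- complement identity at level 2
  have hcomp2 : M2 + Dd2 + 1 = 2 ^ T := by
    rw [hM2, hDd2, hT, ← Finset.sum_add_distrib]
    exact comp_sum ω n z (ω - 1) 2 (by omega)
  -- complement identity at level 1
  have hcomp1 : (cbeNum ω n z +
      ∑ v ∈ Finset.Icc 1 ω, (2 ^ z v - 1) * 2 ^ (tailLen ω n z (v+1))) + 1
      = 2 ^ tailLen ω n z 1 := by
    rw [cbeNum, ← Finset.sum_add_distrib]
    exact comp_sum ω n z ω 1 (by omega)
  -- split the level-1 sums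
  have hmsplit : m = (2 ^ n 1 - 1) * 2 ^ (z 1 + T) + M2 := by
    rw [hm, cbeNum, icc_split 1 ω hω, Finset.sum_insert (by simp)]
  have hdsplit : ∑ v ∈ Finset.Icc 1 ω, (2 ^ z v - 1) * 2 ^ (tailLen ω n z (v+1))
      = (2 ^ z 1 - 1) * 2 ^ T + Dd2 := by
    rw [icc_split 1 ω hω, Finset.sum_insert (by simp)]
  have hd0eq : d0 = (2 ^ z 1 - 1) * 2 ^ T + Dd2 := by
    rw [hd0, hk]
    rw [← hm, hdsplit] at hcomp1
    omega
  -- monotonicity: n 1 < n v for v ≥ 2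
  have hmono1 : ∀ v, 2 ≤ v → v ≤ ω → n 1 < n v := by
    intro v h2 hvω
    induction v with
    | zero => omega
    | succ v ih =>
      rcases Nat.lt_or_ge v 2 with h | h
      · interval_cases v
        · omega
        · exact hmono 1 le_rfl (by omega)
      · exact lt_trans (ih (by omega) (by omega)) (hmono v (by omega) (by omega))
  -- key inequality: 2^{n 1} * Dd2 ≤ M2
  have hkey : 2 ^ n 1 * Dd2 ≤ M2 := by
    rw [hDd2, hM2, Finset.mul_sum]
    apply Finset.sum_le_sum
    intro v hv
    rw [Finset.mem_Icc] at hv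
    rw [pow_add, ← mul_assoc, ← mul_assoc]
    apply Nat.mul_le_mul_right
    have h1 : 2 ^ (n 1 + 1) ≤ 2 ^ n v :=
      Nat.pow_le_pow_right (by norm_num) (hmono1 v hv.1 hv.2)
    have h2 : 1 ≤ 2 ^ n 1 := Nat.one_le_two_pow
    have h3 : 2 ^ n 1 ≤ 2 ^ n v - 1 := by
      rw [pow_succ] at h1; omega
    calc 2 ^ n 1 * (2 ^ z v - 1) ≤ (2 ^ n v - 1) * (2 ^ z v - 1) :=
          Nat.mul_le_mul_right _ h3
      _ ≤ (2 ^ n v - 1) * 2 ^ z v := Nat.mul_le_mul_left _ (Nat.sub_le _ _)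
  -- abstract the powers
  obtain ⟨a', ha⟩ : ∃ a', 2 ^ n 1 = a' + 1 :=
    ⟨2 ^ n 1 - 1, by have := Nat.one_le_two_pow (n := n 1); omega⟩
  have ha'1 : 1 ≤ a' := by
    have : 2 ≤ 2 ^ n 1 := by
      calc 2 = 2 ^ 1 := rfl
        _ ≤ 2 ^ n 1 := Nat.pow_le_pow_right (by norm_num) (hn 1 (by simp [hω]))
    omega
  obtain ⟨b', hb⟩ : ∃ b', 2 ^ z 1 = b' + 1 :=
    ⟨2 ^ z 1 - 1, by have := Nat.one_le_two_pow (n := z 1); omega⟩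
  have hc : 2 ^ T = M2 + Dd2 + 1 := hcomp2.symm
  have hzT : 2 ^ (z 1 + T) = (b' + 1) * (M2 + Dd2 + 1) := by
    rw [pow_add, hb, hc]
  have hm2 : m = a' * ((b' + 1) * (M2 + Dd2 + 1)) + M2 := by
    rw [hmsplit, hzT, ha, Nat.add_sub_cancel]
  have hd02 : d0 = b' * (M2 + Dd2 + 1) + Dd2 := by
    rw [hd0eq, hb, hc, Nat.add_sub_cancel]
  have hD2 : D = a' * (M2 + Dd2 + 1) + Dd2 := by
    rw [hD, ha, hc, Nat.add_sub_cancel]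
  have hkey' : (a' + 1) * Dd2 ≤ M2 := by rwa [ha] at hkey
  -- the central identity: m - (2^{n 1} - 1) * d0 = (a'+1) * M2 + a'
  have hsum : (2 ^ n 1 - 1) * d0 + ((a' + 1) * M2 + a') = m := by
    rw [ha, Nat.add_sub_cancel, hd02, hm2]; ring
  have hX : m - (2 ^ n 1 - 1) * d0 = (a' + 1) * M2 + a' := by omega
  rw [hX, hD2]
  refine ⟨by nlinarith, by nlinarith, ?_⟩
  have h1 : 1 * (a' * (M2 + Dd2 + 1) + Dd2) ≤ (a' + 1) * M2 + a' := by nlinarith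
  have h2 : (a' + 1) * M2 + a' < (1 + 1) * (a' * (M2 + Dd2 + 1) + Dd2) := by nlinarith
  exact Nat.div_eq_of_lt_le h1 h2
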